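/- arXiv:1507.05316 — 2 statements merged into one kernel-verified Lean document; each statement's English description precedes it below -/
import Mathlib

section
/- Let n ≥ 1. The set C_n of coincident Boolean functions with n variables is an 𝔽₂-linear subspace of the space of all Boolean functions with n variables (it contains 0 and is closed under pointwise addition), and its cardinality is 2^{2^{n−1}}; equivalently, it has dimension 2^{n−1} over 𝔽₂. -/
/-! Writing `F(·, c)` for the restriction of `F` to the hyperplane where the last variable
is `c`, one has `μ(F)(·, 0) = μ(F(·, 0))` and `μ(F)(·, 1) = μ(F(·, 0)) + μ(F(·, 1))`.
By induction `μ` is an involution, and then `F` is coincident iff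
`F(·, 0) = F(·, 1) + μ(F(·, 1))`. So a coincident function is determined by its restriction
`F(·, 1)`, which can be any function of `n - 1` variables. -/

/-- Möbius transform of a Boolean function with n variables:
`μₙ(f)(u) = ⊕_{v ≼ u} f(v)` where `≼` is componentwise. -/
def mobius {n : ℕ} (f : (Fin n → ZMod 2) → ZMod 2) : (Fin n → ZMod 2) → ZMod 2 :=
  fun u => ∑ v ∈ Finset.univ.filter (fun v : Fin n → ZMod 2 => ∀ i, (v i).val ≤ (u i).val), f v

open Finset

lemma mobius_zero {n : ℕ} : mobius (0 : (Fin n → ZMod 2) → ZMod 2) = 0 := by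
  funext u; simp [mobius]

lemma mobius_add {n : ℕ} (f g : (Fin n → ZMod 2) → ZMod 2) :
    mobius (f + g) = mobius f + mobius g := by
  funext u; simp [mobius, sum_add_distrib]

def sliceLast {m : ℕ} (F : (Fin (m + 1) → ZMod 2) → ZMod 2) (c : ZMod 2) :
    (Fin m → ZMod 2) → ZMod 2 :=
  fun u => F (Fin.snoc u c)

lemma mobius_snoc {m : ℕ} (F : (Fin (m + 1) → ZMod 2) → ZMod 2) (u : Fin m → ZMod 2)
    (b : ZMod 2) :
    mobius F (Fin.snoc u b) = ∑ c ∈ univ.filter (fun c : ZMod 2 => c.val ≤ b.val),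
      mobius (sliceLast F c) u := by
  simp only [mobius, sliceLast, sum_filter]
  rw [← (Fin.snocEquiv fun _ => ZMod 2).sum_comp, Fintype.sum_prod_type]
  refine sum_congr rfl fun c _ => ?_
  split_ifs with hc
  · exact sum_congr rfl fun w _ => by simp [Fin.forall_fin_succ', hc]; rfl
  · exact sum_eq_zero fun w _ => by simp [Fin.forall_fin_succ', hc]

lemma sliceLast_mobius_zero {m : ℕ} (F : (Fin (m + 1) → ZMod 2) → ZMod 2) :
    sliceLast (mobius F) 0 = mobius (sliceLast F 0) := by
  funext u
  have hle : univ.filter (fun c : ZMod 2 => c.val ≤ (0 : ZMod 2).val) = {0} := by decide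
  rw [sliceLast, mobius_snoc, hle, sum_singleton]

lemma sliceLast_mobius_one {m : ℕ} (F : (Fin (m + 1) → ZMod 2) → ZMod 2) :
    sliceLast (mobius F) 1 = mobius (sliceLast F 0) + mobius (sliceLast F 1) := by
  funext u
  have hle : univ.filter (fun c : ZMod 2 => c.val ≤ (1 : ZMod 2).val) = {0, 1} := by decide
  rw [sliceLast, mobius_snoc, hle, sum_pair zero_ne_one, Pi.add_apply]

lemma ext_sliceLast {m : ℕ} {F G : (Fin (m + 1) → ZMod 2) → ZMod 2}
    (h₀ : sliceLast F 0 = sliceLast G 0) (h₁ : sliceLast F 1 = sliceLast G 1) : F = G := by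
  funext v
  induction v using Fin.snocCases with
  | snoc u b =>
    fin_cases b
    exacts [congrFun h₀ u, congrFun h₁ u]

lemma mobius_mobius {n : ℕ} (f : (Fin n → ZMod 2) → ZMod 2) : mobius (mobius f) = f := by
  induction n with
  | zero =>
    funext u
    simp [mobius, Subsingleton.elim _ u]
  | succ m ih =>
    apply ext_sliceLast
    · rw [sliceLast_mobius_zero, sliceLast_mobius_zero, ih]
    · rw [sliceLast_mobius_one, sliceLast_mobius_zero, sliceLast_mobius_one, mobius_add, ih, ih,
        CharTwo.add_cancel_left]

lemma mobius_eq_self_iff {m : ℕ} (F : (Fin (m + 1) → ZMod 2) → ZMod 2) :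
    mobius F = F ↔ sliceLast F 0 = sliceLast F 1 + mobius (sliceLast F 1) := by
  constructor
  · intro h
    have h₀ := sliceLast_mobius_zero F
    have h₁ := sliceLast_mobius_one F
    rw [h] at h₀ h₁
    rw [← h₀] at h₁
    nth_rw 1 [h₁]
    exact (CharTwo.add_cancel_right _ _).symm
  · intro h
    have h₀ : mobius (sliceLast F 0) = sliceLast F 0 := by
      rw [h, mobius_add, mobius_mobius, add_comm]
    apply ext_sliceLast
    · rw [sliceLast_mobius_zero, h₀]
    · rw [sliceLast_mobius_one, h₀, h, CharTwo.add_cancel_right]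

def ofSliceLast {m : ℕ} (g₀ g₁ : (Fin m → ZMod 2) → ZMod 2) :
    (Fin (m + 1) → ZMod 2) → ZMod 2 :=
  fun v => if v (Fin.last m) = 0 then g₀ (Fin.init v) else g₁ (Fin.init v)

lemma sliceLast_ofSliceLast_zero {m : ℕ} (g₀ g₁ : (Fin m → ZMod 2) → ZMod 2) :
    sliceLast (ofSliceLast g₀ g₁) 0 = g₀ := by
  funext u; simp [sliceLast, ofSliceLast]

lemma sliceLast_ofSliceLast_one {m : ℕ} (g₀ g₁ : (Fin m → ZMod 2) → ZMod 2) :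
    sliceLast (ofSliceLast g₀ g₁) 1 = g₁ := by
  funext u; simp [sliceLast, ofSliceLast]

def coincidentEquiv (m : ℕ) :
    {F : (Fin (m + 1) → ZMod 2) → ZMod 2 // mobius F = F} ≃
      ((Fin m → ZMod 2) → ZMod 2) where
  toFun F := sliceLast F 1
  invFun g := ⟨ofSliceLast (g + mobius g) g, (mobius_eq_self_iff _).2 <| by
    rw [sliceLast_ofSliceLast_zero, sliceLast_ofSliceLast_one]⟩
  left_inv F := Subtype.ext <| ext_sliceLast
    (by rw [sliceLast_ofSliceLast_zero, (mobius_eq_self_iff _).1 F.2])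
    (sliceLast_ofSliceLast_one _ _)
  right_inv g := sliceLast_ofSliceLast_one _ _

lemma card_filter_mobius_eq_self (m : ℕ) :
    #{F : (Fin (m + 1) → ZMod 2) → ZMod 2 | mobius F = F} = 2 ^ 2 ^ m := by
  rw [← Fintype.card_subtype, Fintype.card_congr (coincidentEquiv m)]
  simp

theorem stmt12 (n : ℕ) (hn : 1 ≤ n) :
    mobius (0 : (Fin n → ZMod 2) → ZMod 2) = 0 ∧
    (∀ f g : (Fin n → ZMod 2) → ZMod 2,
      mobius f = f → mobius g = g → mobius (f + g) = f + g) ∧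
    (Finset.univ.filter
      (fun f : (Fin n → ZMod 2) → ZMod 2 => mobius f = f)).card
      = 2 ^ (2 ^ (n - 1)) := by
  obtain ⟨m, rfl⟩ := Nat.exists_eq_add_of_le' hn
  refine ⟨mobius_zero, fun f g hf hg => by rw [mobius_add, hf, hg], ?_⟩
  exact card_filter_mobius_eq_self m
end

section
/- Let n ≥ 1 and let f be a Boolean function with n variables with Reed–Muller decomposition f(y,b) = f⁰(y) ⊕ b·f¹(y), where f⁰, f¹ are Boolean functions with n−1 variables. Let φₘ(g) = g ⊕ μₘ(g). Then for all y ∈ 𝔽₂ⁿ⁻¹ and b ∈ 𝔽₂, φₙ(f)(y,b) = φₙ₋₁(f⁰)(y) ⊕ b·(φₙ₋₁(f⁰)(y) ⊕ φₙ₋₁(f¹)(y) ⊕ f⁰(y)). -/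
/-- Möbius transform on 𝔽₂^m × 𝔽₂, identified with 𝔽₂^(m+1) with the
componentwise partial order. -/
def mobiusP {m : ℕ} (F : ((Fin m → ZMod 2) × ZMod 2) → ZMod 2) :
    ((Fin m → ZMod 2) × ZMod 2) → ZMod 2 :=
  fun p => ∑ q ∈ Finset.univ.filter
    (fun q : (Fin m → ZMod 2) × ZMod 2 =>
      (∀ i, (q.1 i).val ≤ (p.1 i).val) ∧ (q.2).val ≤ (p.2).val), F q

open Finset

lemma mobiusP_apply {m : ℕ} (F : ((Fin m → ZMod 2) × ZMod 2) → ZMod 2)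
    (y : Fin m → ZMod 2) (b : ZMod 2) :
    mobiusP F (y, b) =
      mobius (fun v => ∑ c ∈ univ.filter (fun c : ZMod 2 => c.val ≤ b.val), F (v, c)) y := by
  rw [mobiusP, mobius, ← sum_product']
  exact sum_congr (by ext; simp) fun _ _ => rfl

lemma sum_val_le_add_mul (a b d : ZMod 2) :
    ∑ c ∈ univ.filter (fun c : ZMod 2 => c.val ≤ b.val), (a + c * d) = a + b * (a + d) := by
  revert a b d
  decide

lemma mobius_add_s13 {m : ℕ} (g h : (Fin m → ZMod 2) → ZMod 2) (y : Fin m → ZMod 2) :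
    mobius (fun v => g v + h v) y = mobius g y + mobius h y :=
  sum_add_distrib

lemma mobius_const_mul {m : ℕ} (b : ZMod 2) (g : (Fin m → ZMod 2) → ZMod 2)
    (y : Fin m → ZMod 2) :
    mobius (fun v => b * g v) y = b * mobius g y :=
  (mul_sum ..).symm

lemma mobiusP_of_reedMuller {m : ℕ} {f : ((Fin m → ZMod 2) × ZMod 2) → ZMod 2}
    {f0 f1 : (Fin m → ZMod 2) → ZMod 2} (hRM : ∀ y b, f (y, b) = f0 y + b * f1 y)
    (y : Fin m → ZMod 2) (b : ZMod 2) :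
    mobiusP f (y, b) = mobius f0 y + b * (mobius f0 y + mobius f1 y) := by
  simp only [mobiusP_apply, hRM, sum_val_le_add_mul, mobius_add_s13, mobius_const_mul]

theorem stmt13_general (n : ℕ)
    (f : ((Fin (n - 1) → ZMod 2) × ZMod 2) → ZMod 2)
    (f0 f1 : (Fin (n - 1) → ZMod 2) → ZMod 2)
    (hRM : ∀ y b, f (y, b) = f0 y + b * f1 y) :
    ∀ (y : Fin (n - 1) → ZMod 2) (b : ZMod 2),
      f (y, b) + mobiusP f (y, b) =
        (f0 y + mobius f0 y) +
          b * ((f0 y + mobius f0 y) + (f1 y + mobius f1 y) + f0 y) := by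
  intro y b
  rw [hRM, mobiusP_of_reedMuller hRM]
  have two_eq_zero : (2 : ZMod 2) = 0 := rfl
  linear_combination -(b * f0 y) * two_eq_zero

theorem stmt13 (n : ℕ) (hn : 1 ≤ n)
    (f : ((Fin (n - 1) → ZMod 2) × ZMod 2) → ZMod 2)
    (f0 f1 : (Fin (n - 1) → ZMod 2) → ZMod 2)
    (hRM : ∀ y b, f (y, b) = f0 y + b * f1 y) :
    ∀ (y : Fin (n - 1) → ZMod 2) (b : ZMod 2),
      f (y, b) + mobiusP f (y, b) =
        (f0 y + mobius f0 y) +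
          b * ((f0 y + mobius f0 y) + (f1 y + mobius f1 y) + f0 y) :=
  stmt13_general n f f0 f1 hRM
end
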